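/- Let φ be δ-linear, i.e. φ(x) = x for |x| < δ, and let ‖A‖_2 < 1. If σ < δ(1 - ‖A‖_2)/(√N ‖C‖_∞) and the inputs satisfy |z_t| ≤ σ, then the sequence x_t := Σ_{j=0}^∞ A^j C z_{t-j} satisfies the nonlinear recursion x_t = Φ(A x_{t-1} + C z_t); that is, the nonlinear network states coincide with those of the linear system x_t = A x_{t-1} + C z_t. -/

import Mathlib

/-- Spectral norm of a real matrix. -/
noncomputable def spectralNorm2 {N : ℕ} (A : Matrix (Fin N) (Fin N) ℝ) : ℝ :=
  ‖Matrix.toEuclideanCLM (𝕜 := ℝ) A‖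

section aux

variable {N : ℕ}

lemma euclid_abs_apply_le_norm (v : EuclideanSpace ℝ (Fin N)) (i : Fin N) :
    |v i| ≤ ‖v‖ := by
  rw [EuclideanSpace.norm_eq]
  have h1 : |v i| = Real.sqrt (‖v i‖ ^ 2) := by
    rw [Real.sqrt_sq_eq_abs, abs_norm, Real.norm_eq_abs]
  rw [h1]
  apply Real.sqrt_le_sqrt
  exact Finset.single_le_sum (f := fun k => ‖v k‖ ^ 2)
    (fun k _ => sq_nonneg _) (Finset.mem_univ i)

lemma pow_mulVec_bound (A : Matrix (Fin N) (Fin N) ℝ) (C : Fin N → ℝ) (j : ℕ) (i : Fin N) :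
    |(A ^ j).mulVec C i| ≤ spectralNorm2 A ^ j * ‖(WithLp.equiv 2 (Fin N → ℝ)).symm C‖ := by
  set T := Matrix.toEuclideanCLM (𝕜 := ℝ) A with hT
  set Csp : EuclideanSpace ℝ (Fin N) := (WithLp.equiv 2 (Fin N → ℝ)).symm C with hCsp
  have key : (T ^ j) Csp = (WithLp.equiv 2 (Fin N → ℝ)).symm ((A ^ j).mulVec C) := by
    rw [hT, ← map_pow]
    rfl
  have happ : (A ^ j).mulVec C i = (T ^ j) Csp i := by
    rw [key]; rfl
  have h1 : |(A ^ j).mulVec C i| ≤ ‖(T ^ j) Csp‖ := by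
    rw [happ]; exact euclid_abs_apply_le_norm _ i
  refine h1.trans ?_
  have hTj : ‖T ^ j‖ ≤ ‖T‖ ^ j := by
    rcases Nat.eq_zero_or_pos j with rfl | hj
    · rw [pow_zero, pow_zero, ContinuousLinearMap.one_def]
      exact ContinuousLinearMap.norm_id_le
    · exact norm_pow_le' T hj
  calc ‖(T ^ j) Csp‖ ≤ ‖T ^ j‖ * ‖Csp‖ := (T ^ j).le_opNorm Csp
    _ ≤ ‖T‖ ^ j * ‖Csp‖ := mul_le_mul_of_nonneg_right hTj (norm_nonneg _)

end aux

/-- with a `δ`-linear activation, `‖A‖₂ < 1` and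
`σ < δ(1 - ‖A‖₂)/(√N ‖C‖_∞)`, if `|z_t| ≤ σ` then the linear states
`x_t = Σ_{j≥0} A^j C z_{t-j}` satisfy the nonlinear recursion
`x_t = Φ(A x_{t-1} + C z_t)`. -/
theorem stmt_7 {N : ℕ} [NeZero N] (δ : ℝ) (hδ : 0 < δ) (φ : ℝ → ℝ)
    (hlin : ∀ y : ℝ, |y| < δ → φ y = y)
    (A : Matrix (Fin N) (Fin N) ℝ) (hA : spectralNorm2 A < 1)
    (C : Fin N → ℝ)
    (cmax : ℝ) (hcmax : cmax = Finset.univ.sup' Finset.univ_nonempty (fun i => |C i|))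
    (σ : ℝ) (hσ : σ < δ * (1 - spectralNorm2 A) / (Real.sqrt N * cmax))
    (z : ℤ → ℝ) (hz : ∀ s : ℤ, |z s| ≤ σ)
    (hsum : ∀ t : ℤ, Summable (fun j : ℕ => z (t - (j : ℤ)) • (A ^ j).mulVec C))
    (x : ℤ → Fin N → ℝ)
    (hx : ∀ t : ℤ, x t = ∑' j : ℕ, z (t - (j : ℤ)) • (A ^ j).mulVec C) :
    ∀ t : ℤ, x t = fun i => φ (A.mulVec (x (t - 1)) i + C i * z t) := by
  -- basic positivity facts
  have hσ0 : 0 ≤ σ := (abs_nonneg (z 0)).trans (hz 0)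
  have hr0 : 0 ≤ spectralNorm2 A := norm_nonneg _
  have hr1 : 0 < 1 - spectralNorm2 A := by linarith
  have i0 : Fin N := ⟨0, Nat.pos_of_ne_zero (NeZero.ne N)⟩
  have hcmax0 : 0 ≤ cmax := by
    rw [hcmax]
    exact le_trans (abs_nonneg (C i0)) (Finset.le_sup' (fun i => |C i|) (Finset.mem_univ i0))
  have hNpos : (0:ℝ) < Real.sqrt N := by
    have : (0:ℝ) < N := by exact_mod_cast Nat.pos_of_ne_zero (NeZero.ne N)
    exact Real.sqrt_pos.mpr this
  have hcpos : 0 < cmax := by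
    rcases lt_or_eq_of_le hcmax0 with h | h
    · exact h
    · exfalso
      rw [← h, mul_zero, div_zero] at hσ
      linarith
  have hKpos : 0 < Real.sqrt N * cmax := mul_pos hNpos hcpos
  -- norm of C bounded by √N * cmax
  set Csp : EuclideanSpace ℝ (Fin N) := (WithLp.equiv 2 (Fin N → ℝ)).symm C with hCsp
  have hCnorm : ‖Csp‖ ≤ Real.sqrt N * cmax := by
    rw [EuclideanSpace.norm_eq]
    have hsum' : ∑ i : Fin N, ‖Csp i‖ ^ 2 ≤ ∑ _i : Fin N, cmax ^ 2 := by
      apply Finset.sum_le_sum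
      intro i _
      have hi : |C i| ≤ cmax := by
        rw [hcmax]; exact Finset.le_sup' (fun i => |C i|) (Finset.mem_univ i)
      have hci : ‖Csp i‖ = |C i| := by rw [Real.norm_eq_abs]; rfl
      rw [hci]
      exact pow_le_pow_left₀ (abs_nonneg _) hi 2
    refine (Real.sqrt_le_sqrt hsum').trans ?_
    rw [Finset.sum_const, Finset.card_univ, Fintype.card_fin, nsmul_eq_mul,
      Real.sqrt_mul (by positivity), Real.sqrt_sq hcmax0]
  -- pointwise bound on x t
  have hbound : ∀ t : ℤ, ∀ i : Fin N, |x t i| < δ := by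
    intro t i
    have hsx := hsum t
    have happ : x t i = ∑' j : ℕ, z (t - (j : ℤ)) * (A ^ j).mulVec C i := by
      rw [hx t, tsum_apply hsx]
      rfl
    have hsummable : Summable (fun j : ℕ => z (t - (j : ℤ)) * (A ^ j).mulVec C i) := by
      have h := hsx.map (ContinuousLinearMap.proj (R := ℝ) (φ := fun _ : Fin N => ℝ) i)
        (ContinuousLinearMap.proj i).continuous
      simpa [Function.comp_def] using h
    have hgeo : Summable (fun j : ℕ => σ * (Real.sqrt N * cmax) * spectralNorm2 A ^ j) :=
      (summable_geometric_of_lt_one hr0 hA).mul_left _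
    have hterm : ∀ j : ℕ, |z (t - (j : ℤ)) * (A ^ j).mulVec C i|
        ≤ σ * (Real.sqrt N * cmax) * spectralNorm2 A ^ j := by
      intro j
      rw [abs_mul]
      calc |z (t - (j : ℤ))| * |(A ^ j).mulVec C i|
          ≤ σ * (spectralNorm2 A ^ j * (Real.sqrt N * cmax)) := by
            apply mul_le_mul (hz _) ?_ (abs_nonneg _) hσ0
            exact (pow_mulVec_bound A C j i).trans
              (mul_le_mul_of_nonneg_left hCnorm (pow_nonneg hr0 j))
        _ = σ * (Real.sqrt N * cmax) * spectralNorm2 A ^ j := by ring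
    have h1 : |x t i| ≤ ∑' j : ℕ, σ * (Real.sqrt N * cmax) * spectralNorm2 A ^ j := by
      rw [happ]
      have habs : Summable (fun j : ℕ => |z (t - (j : ℤ)) * (A ^ j).mulVec C i|) :=
        hsummable.abs
      calc |∑' j : ℕ, z (t - (j : ℤ)) * (A ^ j).mulVec C i|
          ≤ ∑' j : ℕ, |z (t - (j : ℤ)) * (A ^ j).mulVec C i| := by
            simpa only [Real.norm_eq_abs] using
              norm_tsum_le_tsum_norm (f := fun j : ℕ => z (t - (j : ℤ)) * (A ^ j).mulVec C i)
                (by simpa only [Real.norm_eq_abs] using habs)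
        _ ≤ ∑' j : ℕ, σ * (Real.sqrt N * cmax) * spectralNorm2 A ^ j :=
            habs.tsum_le_tsum hterm hgeo
    have h2 : ∑' j : ℕ, σ * (Real.sqrt N * cmax) * spectralNorm2 A ^ j
        = σ * (Real.sqrt N * cmax) * (1 - spectralNorm2 A)⁻¹ := by
      rw [tsum_mul_left, tsum_geometric_of_lt_one hr0 hA]
    have h3 : σ * (Real.sqrt N * cmax) * (1 - spectralNorm2 A)⁻¹ < δ := by
      rw [← div_eq_mul_inv, div_lt_iff₀ hr1]
      exact (lt_div_iff₀ hKpos).mp hσ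
    calc |x t i| ≤ _ := h1
      _ = _ := h2
      _ < δ := h3
  -- the linear recursion
  have hlinrec : ∀ t : ℤ, x t = z t • C + A.mulVec (x (t - 1)) := by
    intro t
    have hshift : (fun j : ℕ => z (t - ((j + 1 : ℕ) : ℤ)) • (A ^ (j + 1)).mulVec C)
        = fun j : ℕ => z ((t - 1) - (j : ℤ)) • A.mulVec ((A ^ j).mulVec C) := by
      funext j
      congr 1
      · congr 1; push_cast; ring
      · rw [pow_succ', Matrix.mulVec_mulVec]
    have h0 : x t = z t • C + ∑' j : ℕ, z (t - ((j + 1 : ℕ) : ℤ)) • (A ^ (j + 1)).mulVec C := by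
      rw [hx t, (hsum t).tsum_eq_zero_add]
      simp
    have hmap : A.mulVec (x (t - 1))
        = ∑' j : ℕ, z ((t - 1) - (j : ℤ)) • A.mulVec ((A ^ j).mulVec C) := by
      rw [hx (t - 1)]
      have hg := (LinearMap.toContinuousLinearMap (Matrix.mulVecLin A)).map_tsum (hsum (t - 1))
      simpa [Matrix.mulVecLin_apply] using hg
    rw [h0, hshift, ← hmap]
  intro t
  funext i
  have hval : A.mulVec (x (t - 1)) i + C i * z t = x t i := by
    rw [hlinrec t]
    simp [Pi.add_apply, Pi.smul_apply, smul_eq_mul]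
    ring
  rw [hval, hlin _ (hbound t i)]
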